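/- Fix integers m, n ≥ 1 and i with 1 ≤ i ≤ n, and let p be any nonnegative pricing of the items e₁, …, e_{4i}, h, f₁, …, f_{4i} such that the prices of the items e₁, …, e_{4i−4}, f₁, …, f_{4i−4} sum to exactly 6(2i−2). Then the total payment of the twenty-four basic-gadget customers of x_i, the consistency customer, and the H-customer is at most 2mn² + 6(2i−2) + 42; and equality holds if and only if p(h) = mn² and the quadruples (p(e_{4i−3}), p(e_{4i−2}), p(e_{4i−1}), p(e_{4i})) and (p(f_{4i−3}), p(f_{4i−2}), p(f_{4i−1}), p(f_{4i})) are either both equal to (1, 2, 2, 1) or both equal to (2, 1, 1, 2). -/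

import Mathlib

/-!
Each basic gadget earns at most 18, attained exactly at the prices `(1,2,2,1)` and `(2,1,1,2)`,
and a customer earns at most her budget, so the bound is the sum of these maxima. At equality
`p(h) = mn²`, and the consistency customer pays her full budget, which with the prescribed sum
of the earlier prices forces `p(e_{4i-3}) + p(e_{4i-2}) + p(e_{4i-1}) + p(f_{4i-3}) = 6`.
This is `5 + 1` or `4 + 2` when the two gadgets agree, but `5 + 2` or `4 + 1` when they do not.
-/

/-- A single-minded customer with bundle price `x` and budget `B` pays `x` if
`x ≤ B` and `0` otherwise. -/
noncomputable def pay (x B : ℝ) : ℝ := if x ≤ B then x else 0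

/-- The profit of a pricing `p` of a quadruple of items from the twelve
basic-gadget customers: single-item customers with budgets `1,2,2,1` and
`2,1,1,2`, two customers of budget `3` on the first and last pairs, and two
customers of budgets `4` and `2` on the middle pair. -/
noncomputable def basicProfit (p : Fin 4 → ℝ) : ℝ :=
  pay (p 0) 1 + pay (p 1) 2 + pay (p 2) 2 + pay (p 3) 1 +
  pay (p 0) 2 + pay (p 1) 1 + pay (p 2) 1 + pay (p 3) 2 +
  pay (p 0 + p 1) 3 + pay (p 2 + p 3) 3 +
  pay (p 1 + p 2) 4 + pay (p 1 + p 2) 2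

open Finset

lemma pay_le_budget (x : ℝ) {B : ℝ} (hB : 0 ≤ B) : pay x B ≤ B := by
  unfold pay; split_ifs <;> linarith

lemma pay_eq_budget_iff {x B : ℝ} (hB : 0 < B) : pay x B = B ↔ x = B := by
  unfold pay; split_ifs <;> constructor <;> intro <;> linarith

lemma pay_add_pay_le_of_eq_two_mul (x : ℝ) {b c : ℝ} (hb : 0 ≤ b) (hc : c = 2 * b) :
    pay x b + pay x c ≤ c := by
  unfold pay; split_ifs <;> linarith

lemma pay_add_pay_eq_iff_of_eq_two_mul {x b c : ℝ} (hb : 0 < b) (hc : c = 2 * b) :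
    pay x b + pay x c = c ↔ x = b ∨ x = c := by
  unfold pay
  split_ifs <;> constructor <;> intro h <;>
    first
      | (left; linarith)
      | (right; linarith)
      | linarith
      | (rcases h with rfl | rfl <;> linarith)

lemma basicProfit_eq_sum_pairs (p : Fin 4 → ℝ) :
    basicProfit p =
      (pay (p 0) 1 + pay (p 0) 2) + (pay (p 1) 1 + pay (p 1) 2) + (pay (p 2) 1 + pay (p 2) 2) +
        (pay (p 3) 1 + pay (p 3) 2) + pay (p 0 + p 1) 3 + pay (p 2 + p 3) 3 +
        (pay (p 1 + p 2) 2 + pay (p 1 + p 2) 4) := by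
  unfold basicProfit; ring

lemma basicProfit_le (p : Fin 4 → ℝ) : basicProfit p ≤ 18 := by
  have single (k : Fin 4) : pay (p k) 1 + pay (p k) 2 ≤ 2 :=
    pay_add_pay_le_of_eq_two_mul _ zero_le_one (by norm_num)
  have pair12 : pay (p 1 + p 2) 2 + pay (p 1 + p 2) 4 ≤ 4 :=
    pay_add_pay_le_of_eq_two_mul _ zero_le_two (by norm_num)
  have pair01 := pay_le_budget (p 0 + p 1) (by norm_num : (0 : ℝ) ≤ 3)
  have pair23 := pay_le_budget (p 2 + p 3) (by norm_num : (0 : ℝ) ≤ 3)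
  rw [basicProfit_eq_sum_pairs]
  linarith [single 0, single 1, single 2, single 3]

lemma basicProfit_eq_iff (p : Fin 4 → ℝ) :
    basicProfit p = 18 ↔
      (p 0 = 1 ∧ p 1 = 2 ∧ p 2 = 2 ∧ p 3 = 1) ∨ (p 0 = 2 ∧ p 1 = 1 ∧ p 2 = 1 ∧ p 3 = 2) := by
  constructor
  · intro h
    have single (k : Fin 4) : pay (p k) 1 + pay (p k) 2 ≤ 2 :=
      pay_add_pay_le_of_eq_two_mul _ zero_le_one (by norm_num)
    have := single 0
    have := single 1
    have := single 2
    have := single 3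
    have := pay_add_pay_le_of_eq_two_mul (p 1 + p 2) zero_le_two (by norm_num : (4 : ℝ) = 2 * 2)
    have := pay_le_budget (p 0 + p 1) (by norm_num : (0 : ℝ) ≤ 3)
    have := pay_le_budget (p 2 + p 3) (by norm_num : (0 : ℝ) ≤ 3)
    rw [basicProfit_eq_sum_pairs] at h
    have h1 : p 1 = 1 ∨ p 1 = 2 :=
      (pay_add_pay_eq_iff_of_eq_two_mul one_pos (by norm_num)).mp (by linarith)
    have h2 : p 2 = 1 ∨ p 2 = 2 :=
      (pay_add_pay_eq_iff_of_eq_two_mul one_pos (by norm_num)).mp (by linarith)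
    have h12 : p 1 + p 2 = 2 ∨ p 1 + p 2 = 4 :=
      (pay_add_pay_eq_iff_of_eq_two_mul two_pos (by norm_num)).mp (by linarith)
    have h01 : p 0 + p 1 = 3 := (pay_eq_budget_iff (by norm_num)).mp (by linarith)
    have h23 : p 2 + p 3 = 3 := (pay_eq_budget_iff (by norm_num)).mp (by linarith)
    rcases h1 with h1 | h1 <;> rcases h2 with h2 | h2
    · exact .inr ⟨by linarith, h1, h2, by linarith⟩
    · rcases h12 with h12 | h12 <;> linarith
    · rcases h12 with h12 | h12 <;> linarith
    · exact .inl ⟨by linarith, h1, h2, by linarith⟩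
  · rintro (⟨h0, h1, h2, h3⟩ | ⟨h0, h1, h2, h3⟩) <;> norm_num [basicProfit, pay, h0, h1, h2, h3]

/-- The profit of the variable gadget, where `M` stands for `mn²` (the budget of the `H`-customer)
and `S` for the total price of `e₁, …, e_{4i-4}, f₁, …, f_{4i-4}`. -/
noncomputable def variableGadgetProfit (M S : ℝ) (a b : Fin 4 → ℝ) (ph : ℝ) : ℝ :=
  basicProfit a + basicProfit b + pay (S + a 0 + a 1 + a 2 + ph + b 0) (M + S + 6) + pay ph M

section VariableGadget

variable {M S : ℝ} (a b : Fin 4 → ℝ) (ph : ℝ)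

lemma variableGadgetProfit_le (hM : 0 ≤ M) (hS : 0 ≤ S) :
    variableGadgetProfit M S a b ph ≤ 2 * M + S + 42 := by
  unfold variableGadgetProfit
  linarith [basicProfit_le a, basicProfit_le b, pay_le_budget ph hM,
    pay_le_budget (S + a 0 + a 1 + a 2 + ph + b 0) (by linarith : 0 ≤ M + S + 6)]

lemma variableGadgetProfit_eq_iff (hM : 0 < M) (hS : 0 ≤ S) :
    variableGadgetProfit M S a b ph = 2 * M + S + 42 ↔
      ph = M ∧
        ((a 0 = 1 ∧ a 1 = 2 ∧ a 2 = 2 ∧ a 3 = 1 ∧ b 0 = 1 ∧ b 1 = 2 ∧ b 2 = 2 ∧ b 3 = 1) ∨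
         (a 0 = 2 ∧ a 1 = 1 ∧ a 2 = 1 ∧ a 3 = 2 ∧ b 0 = 2 ∧ b 1 = 1 ∧ b 2 = 1 ∧ b 3 = 2)) := by
  have hA := basicProfit_le a
  have hB := basicProfit_le b
  have hC := pay_le_budget (S + a 0 + a 1 + a 2 + ph + b 0) (by linarith : 0 ≤ M + S + 6)
  unfold variableGadgetProfit
  rw [show 2 * M + S + 42 = 18 + 18 + (M + S + 6) + M by ring,
    add_eq_add_iff_eq_and_eq (by linarith) (pay_le_budget ph hM.le),
    add_eq_add_iff_eq_and_eq (by linarith) hC, add_eq_add_iff_eq_and_eq hA hB,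
    basicProfit_eq_iff, basicProfit_eq_iff, pay_eq_budget_iff (by linarith), pay_eq_budget_iff hM]
  constructor
  · rintro ⟨⟨⟨⟨a0, a1, a2, a3⟩ | ⟨a0, a1, a2, a3⟩, ⟨b0, b1, b2, b3⟩ | ⟨b0, b1, b2, b3⟩⟩, hc⟩, rfl⟩
    · exact ⟨rfl, .inl ⟨a0, a1, a2, a3, b0, b1, b2, b3⟩⟩
    · linarith
    · linarith
    · exact ⟨rfl, .inr ⟨a0, a1, a2, a3, b0, b1, b2, b3⟩⟩
  · rintro ⟨rfl, ⟨a0, a1, a2, a3, b0, b1, b2, b3⟩ | ⟨a0, a1, a2, a3, b0, b1, b2, b3⟩⟩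
    · exact ⟨⟨⟨.inl ⟨a0, a1, a2, a3⟩, .inl ⟨b0, b1, b2, b3⟩⟩, by linarith⟩, rfl⟩
    · exact ⟨⟨⟨.inr ⟨a0, a1, a2, a3⟩, .inr ⟨b0, b1, b2, b3⟩⟩, by linarith⟩, rfl⟩

end VariableGadget

theorem variable_gadget_consistency_general
    (m n i : ℕ) (hm : 1 ≤ m) (hn : 1 ≤ n)
    (pe pf : ℕ → ℝ) (ph : ℝ)
    (hsum : ∑ k ∈ Finset.Icc 1 (4 * i - 4), (pe k + pf k) = 6 * (2 * (i : ℝ) - 2)) :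
    basicProfit ![pe (4 * i - 3), pe (4 * i - 2), pe (4 * i - 1), pe (4 * i)] +
        basicProfit ![pf (4 * i - 3), pf (4 * i - 2), pf (4 * i - 1), pf (4 * i)] +
        pay ((∑ k ∈ Finset.Icc 1 (4 * i - 1), pe k) + ph +
              ∑ k ∈ Finset.Icc 1 (4 * i - 3), pf k)
          ((m : ℝ) * (n : ℝ) ^ 2 + 6 * (2 * (i : ℝ) - 2) + 6) +
        pay ph ((m : ℝ) * (n : ℝ) ^ 2) ≤
      2 * (m : ℝ) * (n : ℝ) ^ 2 + 6 * (2 * (i : ℝ) - 2) + 42 ∧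
    (basicProfit ![pe (4 * i - 3), pe (4 * i - 2), pe (4 * i - 1), pe (4 * i)] +
          basicProfit ![pf (4 * i - 3), pf (4 * i - 2), pf (4 * i - 1), pf (4 * i)] +
          pay ((∑ k ∈ Finset.Icc 1 (4 * i - 1), pe k) + ph +
                ∑ k ∈ Finset.Icc 1 (4 * i - 3), pf k)
            ((m : ℝ) * (n : ℝ) ^ 2 + 6 * (2 * (i : ℝ) - 2) + 6) +
          pay ph ((m : ℝ) * (n : ℝ) ^ 2) =
        2 * (m : ℝ) * (n : ℝ) ^ 2 + 6 * (2 * (i : ℝ) - 2) + 42 ↔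
      ph = (m : ℝ) * (n : ℝ) ^ 2 ∧
        ((pe (4 * i - 3) = 1 ∧ pe (4 * i - 2) = 2 ∧ pe (4 * i - 1) = 2 ∧ pe (4 * i) = 1 ∧
          pf (4 * i - 3) = 1 ∧ pf (4 * i - 2) = 2 ∧ pf (4 * i - 1) = 2 ∧ pf (4 * i) = 1) ∨
         (pe (4 * i - 3) = 2 ∧ pe (4 * i - 2) = 1 ∧ pe (4 * i - 1) = 1 ∧ pe (4 * i) = 2 ∧
          pf (4 * i - 3) = 2 ∧ pf (4 * i - 2) = 1 ∧ pf (4 * i - 1) = 1 ∧ pf (4 * i) = 2))) := by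
  obtain ⟨j, rfl⟩ := Nat.exists_eq_add_one_of_ne_zero (by rintro rfl; norm_num at hsum : i ≠ 0)
  have hM : (0 : ℝ) < m * n ^ 2 := by
    have : (0 : ℝ) < m := by exact_mod_cast hm
    have : (0 : ℝ) < n := by exact_mod_cast hn
    positivity
  have hS : (0 : ℝ) ≤ 6 * (2 * ((j + 1 : ℕ) : ℝ) - 2) := by
    push_cast
    linarith [j.cast_nonneg (α := ℝ)]
  rw [show 4 * (j + 1) - 4 = 4 * j by omega] at hsum
  have hprice : ∑ k ∈ Icc 1 (4 * j + 3), pe k + ph + ∑ k ∈ Icc 1 (4 * j + 1), pf k =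
      6 * (2 * ((j + 1 : ℕ) : ℝ) - 2) + pe (4 * j + 1) + pe (4 * j + 2) + pe (4 * j + 3) + ph +
        pf (4 * j + 1) := by
    rw [← hsum]
    simp only [le_add_iff_nonneg_left, zero_le, sum_Icc_succ_top, sum_add_distrib]
    ring
  rw [show 4 * (j + 1) - 3 = 4 * j + 1 by omega, show 4 * (j + 1) - 2 = 4 * j + 2 by omega,
    show 4 * (j + 1) - 1 = 4 * j + 3 by omega, show 4 * (j + 1) = 4 * j + 4 by omega, hprice,
    mul_assoc 2 (m : ℝ)]
  exact ⟨variableGadgetProfit_le _ _ _ hM.le hS, variableGadgetProfit_eq_iff _ _ _ hM hS⟩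

/-- Lemma consistency.
Fix `m, n ≥ 1` and `1 ≤ i ≤ n`, and let `p` be a nonnegative pricing of the items
`e₁, …, e_{4i}, h, f₁, …, f_{4i}` (prices `pe`, `ph`, `pf`) whose prices of
`e₁, …, e_{4i-4}, f₁, …, f_{4i-4}` sum to `6(2i-2)`.  Then the total payment of
the twenty-four basic-gadget customers of `x_i`, the consistency customer (bundle
`{e_{4i-1}, …, e₁, h, f₁, …, f_{4i-3}}`, budget `mn² + 6(2i-2) + 6`) and the
`H`-customer (bundle `{h}`, budget `mn²`) is at most `2mn² + 6(2i-2) + 42`, with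
equality iff `p(h) = mn²` and the two quadruples
`(pe_{4i-3}, pe_{4i-2}, pe_{4i-1}, pe_{4i})` and
`(pf_{4i-3}, pf_{4i-2}, pf_{4i-1}, pf_{4i})` are both `(1,2,2,1)` or both
`(2,1,1,2)`. -/
theorem variable_gadget_consistency
    (m n i : ℕ) (hm : 1 ≤ m) (hn : 1 ≤ n) (hi1 : 1 ≤ i) (hi2 : i ≤ n)
    (pe pf : ℕ → ℝ) (ph : ℝ)
    (hpe : ∀ k, 0 ≤ pe k) (hpf : ∀ k, 0 ≤ pf k) (hph : 0 ≤ ph)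
    (hsum : ∑ k ∈ Finset.Icc 1 (4 * i - 4), (pe k + pf k) = 6 * (2 * (i : ℝ) - 2)) :
    basicProfit ![pe (4 * i - 3), pe (4 * i - 2), pe (4 * i - 1), pe (4 * i)] +
        basicProfit ![pf (4 * i - 3), pf (4 * i - 2), pf (4 * i - 1), pf (4 * i)] +
        pay ((∑ k ∈ Finset.Icc 1 (4 * i - 1), pe k) + ph +
              ∑ k ∈ Finset.Icc 1 (4 * i - 3), pf k)
          ((m : ℝ) * (n : ℝ) ^ 2 + 6 * (2 * (i : ℝ) - 2) + 6) +
        pay ph ((m : ℝ) * (n : ℝ) ^ 2) ≤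
      2 * (m : ℝ) * (n : ℝ) ^ 2 + 6 * (2 * (i : ℝ) - 2) + 42 ∧
    (basicProfit ![pe (4 * i - 3), pe (4 * i - 2), pe (4 * i - 1), pe (4 * i)] +
          basicProfit ![pf (4 * i - 3), pf (4 * i - 2), pf (4 * i - 1), pf (4 * i)] +
          pay ((∑ k ∈ Finset.Icc 1 (4 * i - 1), pe k) + ph +
                ∑ k ∈ Finset.Icc 1 (4 * i - 3), pf k)
            ((m : ℝ) * (n : ℝ) ^ 2 + 6 * (2 * (i : ℝ) - 2) + 6) +
          pay ph ((m : ℝ) * (n : ℝ) ^ 2) =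
        2 * (m : ℝ) * (n : ℝ) ^ 2 + 6 * (2 * (i : ℝ) - 2) + 42 ↔
      ph = (m : ℝ) * (n : ℝ) ^ 2 ∧
        ((pe (4 * i - 3) = 1 ∧ pe (4 * i - 2) = 2 ∧ pe (4 * i - 1) = 2 ∧ pe (4 * i) = 1 ∧
          pf (4 * i - 3) = 1 ∧ pf (4 * i - 2) = 2 ∧ pf (4 * i - 1) = 2 ∧ pf (4 * i) = 1) ∨
         (pe (4 * i - 3) = 2 ∧ pe (4 * i - 2) = 1 ∧ pe (4 * i - 1) = 1 ∧ pe (4 * i) = 2 ∧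
          pf (4 * i - 3) = 2 ∧ pf (4 * i - 2) = 1 ∧ pf (4 * i - 1) = 1 ∧ pf (4 * i) = 2))) :=
  variable_gadget_consistency_general m n i hm hn pe pf ph hsum
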